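/- The relative operator entropy admits the integral representation S(A|B) = ∫₀¹ (A!ₜB − A)/t dt for positive invertible operators A, B. -/

import Mathlib

/-!
For `x > 0`, `log x = ∫₀¹ (x - 1) / ((1 - t) x + t) dt`, the integrand being the `t`-derivative of
`-log ((1 - t) x + t)`. Put `a = A^{1/2}` and `C = A^{-1/2} B A^{-1/2}`, so that `A = a 1 a` and
`B = a C a`. The harmonic mean commutes with the congruence `X ↦ a X a`, hence
`t⁻¹ (A !ₜ B - A) = a (t⁻¹ (1 !ₜ C - 1)) a = a f_t(C) a` with `f_t(x) = (x - 1) / ((1 - t) x + t)`.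
As `f` is jointly continuous, hence bounded, on `[0, 1] × σ(C)`, the integral over `t` passes
through the functional calculus and gives `log C`; conjugating by `a` gives `S(A|B)`.
-/

open scoped Real

variable {H : Type*} [NormedAddCommGroup H] [InnerProductSpace ℂ H] [CompleteSpace H]

/-- Square root via continuous functional calculus. -/
noncomputable def opSqrt (A : H →L[ℂ] H) : H →L[ℂ] H := cfc Real.sqrt A

/-- Real power via continuous functional calculus. -/
noncomputable def opRpow (A : H →L[ℂ] H) (p : ℝ) : H →L[ℂ] H :=
  cfc (fun x : ℝ => x ^ p) A

/-- Logarithm via continuous functional calculus. -/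
noncomputable def opLog (A : H →L[ℂ] H) : H →L[ℂ] H := cfc Real.log A

/-- Operator inverse (junk value `0` if not invertible). -/
noncomputable def opInv (A : H →L[ℂ] H) : H →L[ℂ] H := Ring.inverse A

/-- `A^{-1/2}`. -/
noncomputable def opInvSqrt (A : H →L[ℂ] H) : H →L[ℂ] H := opInv (opSqrt A)

/-- Weighted arithmetic mean `A ∇ₚ B`. -/
noncomputable def wNabla (p : ℝ) (A B : H →L[ℂ] H) : H →L[ℂ] H := (1 - p) • A + p • B

/-- Weighted harmonic mean `A !ₚ B`. -/
noncomputable def wHarm (p : ℝ) (A B : H →L[ℂ] H) : H →L[ℂ] H :=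
  opInv ((1 - p) • opInv A + p • opInv B)

/-- Weighted geometric mean `A ♯ₚ B`. -/
noncomputable def wGeom (p : ℝ) (A B : H →L[ℂ] H) : H →L[ℂ] H :=
  opSqrt A * opRpow (opInvSqrt A * B * opInvSqrt A) p * opSqrt A

/-- Relative operator entropy `S(A|B)`. -/
noncomputable def relEntropy (A B : H →L[ℂ] H) : H →L[ℂ] H :=
  opSqrt A * opLog (opInvSqrt A * B * opInvSqrt A) * opSqrt A

/-- Furuta parametric relative operator entropy `Sₚ(A|B)`. -/
noncomputable def furutaEntropy (p : ℝ) (A B : H →L[ℂ] H) : H →L[ℂ] H :=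
  opSqrt A * (opRpow (opInvSqrt A * B * opInvSqrt A) p *
    opLog (opInvSqrt A * B * opInvSqrt A)) * opSqrt A

/-- Tsallis relative operator entropy `Tₚ(A|B)`. -/
noncomputable def tsallisEntropy (p : ℝ) (A B : H →L[ℂ] H) : H →L[ℂ] H :=
  p⁻¹ • (wGeom p A B - A)

open MeasureTheory Set

lemma one_sub_mul_add_pos {x t : ℝ} (hx : 0 < x) (ht : t ∈ Icc (0:ℝ) 1) :
    0 < (1 - t) * x + t := by
  obtain ⟨ht0, ht1⟩ := ht
  rcases ht0.eq_or_lt with rfl | ht0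
  · simpa using hx
  · nlinarith [mul_nonneg (sub_nonneg.2 ht1) hx.le]

lemma Real.log_eq_intervalIntegral {x : ℝ} (hx : 0 < x) :
    Real.log x = ∫ t in (0:ℝ)..1, (x - 1) / ((1 - t) * x + t) := by
  have hden : ∀ t ∈ uIcc (0:ℝ) 1, 0 < (1 - t) * x + t := by
    rw [uIcc_of_le zero_le_one]
    exact fun t ht => one_sub_mul_add_pos hx ht
  have hderiv : ∀ t ∈ uIcc (0:ℝ) 1, HasDerivAt (fun s => -Real.log ((1 - s) * x + s))
      ((x - 1) / ((1 - t) * x + t)) t := by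
    intro t ht
    have hlin : HasDerivAt (fun s : ℝ => (1 - s) * x + s) (1 - x) t := by
      refine ((((hasDerivAt_id t).const_sub 1).mul_const x).add (hasDerivAt_id t)).congr_deriv ?_
      ring
    refine (hlin.log (hden t ht).ne').neg.congr_deriv ?_
    rw [← neg_div, neg_sub]
  have hint : IntervalIntegrable (fun t => (x - 1) / ((1 - t) * x + t)) volume 0 1 :=
    (continuousOn_const.div (by fun_prop) fun t ht => (hden t ht).ne').intervalIntegrable
  rw [intervalIntegral.integral_eq_sub_of_hasDerivAt hderiv hint]
  simp

lemma cfc_log_eq_setIntegral {𝒜 : Type*} [CStarAlgebra 𝒜] [PartialOrder 𝒜] [StarOrderedRing 𝒜]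
    {c : 𝒜} (hc : IsStrictlyPositive c) :
    cfc Real.log c = ∫ t in Ioc (0:ℝ) 1, cfc (fun x => (x - 1) / ((1 - t) * x + t)) c := by
  set g : ℝ → ℝ → ℝ := fun t x => (x - 1) / ((1 - t) * x + t)
  have hg : ContinuousOn (Function.uncurry g) (Icc 0 1 ×ˢ spectrum ℝ c) :=
    (Continuous.continuousOn (by fun_prop)).div (Continuous.continuousOn (by fun_prop))
      fun p hp => (one_sub_mul_add_pos (hc.spectrum_pos hp.2) hp.1).ne'
  obtain ⟨M, hM⟩ :=
    (isCompact_Icc.prod (spectrum.isCompact c)).exists_bound_of_continuousOn hg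
  rw [← cfc_setIntegral measurableSet_Ioc g (fun _ => M) c
    (hg.mono (prod_mono Ioc_subset_Icc_self subset_rfl))
    (ae_restrict_of_forall_mem measurableSet_Ioc fun t ht x hx =>
      hM (t, x) ⟨Ioc_subset_Icc_self ht, hx⟩) (hasFiniteIntegral_const M)]
  exact cfc_congr fun x hx => by
    rw [← intervalIntegral.integral_of_le zero_le_one,
      Real.log_eq_intervalIntegral (hc.spectrum_pos hx)]

lemma Ring.inverse_mul_mul_of_isUnit {M₀ : Type*} [MonoidWithZero M₀] {a c : M₀}
    (ha : IsUnit a) (hc : IsUnit c) (x : M₀) :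
    Ring.inverse (a * x * c) = Ring.inverse c * Ring.inverse x * Ring.inverse a := by
  obtain ⟨u, rfl⟩ := ha
  obtain ⟨v, rfl⟩ := hc
  by_cases hx : IsUnit x
  · obtain ⟨w, rfl⟩ := hx
    simp only [← Units.val_mul, Ring.inverse_unit, mul_inv_rev, mul_assoc]
  · have hux : ¬IsUnit (↑u * x * ↑v) := by rwa [Units.isUnit_mul_units, Units.isUnit_units_mul]
    simp [Ring.inverse_non_unit _ hx, Ring.inverse_non_unit _ hux]

lemma integral_mul_mul_of_isUnit {α 𝒜 : Type*} [MeasurableSpace α] {μ : Measure α}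
    [NormedRing 𝒜] [NormedAlgebra ℝ 𝒜] [CompleteSpace 𝒜] {u v : 𝒜} (hu : IsUnit u)
    (hv : IsUnit v) (f : α → 𝒜) : ∫ x, u * f x * v ∂μ = u * (∫ x, f x ∂μ) * v := by
  obtain ⟨u, rfl⟩ := hu
  obtain ⟨v, rfl⟩ := hv
  let e : 𝒜 ≃L[ℝ] 𝒜 := .equivOfInverse
    (ContinuousLinearMap.mulLeftRight ℝ 𝒜 u v) (ContinuousLinearMap.mulLeftRight ℝ 𝒜 ↑u⁻¹ ↑v⁻¹)
    (fun x => by simp [mul_assoc]) (fun x => by simp [mul_assoc])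
  exact e.integral_comp_comm f

lemma wHarm_conj {E : Type*} [NormedAddCommGroup E] [InnerProductSpace ℂ E] (t : ℝ)
    {a : E →L[ℂ] E} (ha : IsUnit a) (X Y : E →L[ℂ] E) :
    wHarm t (a * X * a) (a * Y * a) = a * wHarm t X Y * a := by
  have hb : IsUnit (opInv a) := ha.ringInverse
  simp only [wHarm, opInv] at hb ⊢
  rw [Ring.inverse_mul_mul_of_isUnit ha ha, Ring.inverse_mul_mul_of_isUnit ha ha,
    ← smul_mul_assoc, ← mul_smul_comm, ← smul_mul_assoc, ← mul_smul_comm, ← add_mul, ← mul_add,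
    Ring.inverse_mul_mul_of_isUnit hb hb, Ring.inverse_inverse ha]

lemma wHarm_one_left {C : H →L[ℂ] H} (hC : IsStrictlyPositive C) {t : ℝ}
    (ht : t ∈ Icc (0:ℝ) 1) :
    wHarm t 1 C = cfc (fun x => x / ((1 - t) * x + t)) C := by
  have hden : ∀ x ∈ spectrum ℝ C, (1 - t) + t * x⁻¹ ≠ 0 := fun x hx => by
    have hx := hC.spectrum_pos hx
    rw [show (1 - t) + t * x⁻¹ = ((1 - t) * x + t) / x by field_simp]
    exact (div_pos (one_sub_mul_add_pos hx ht) hx).ne'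
  have hinv : ContinuousOn (fun x : ℝ => x⁻¹) (spectrum ℝ C) :=
    continuousOn_inv₀.mono fun x hx => (hC.spectrum_pos hx).ne'
  have hmean : (1 - t) • opInv 1 + t • opInv C = cfc (fun x => (1 - t) + t * x⁻¹) C := by
    rw [cfc_const_add (1 - t) (fun x => t * x⁻¹) C (continuousOn_const.mul hinv),
      cfc_const_mul t _ C hinv, cfc_ringInverse_id (R := ℝ) (a := C) hC.isUnit, opInv, opInv,
      Ring.inverse_one, Algebra.algebraMap_eq_smul_one]
  rw [wHarm, hmean, opInv,
    ← cfc_inv _ C hden (continuousOn_const.add (continuousOn_const.mul hinv))]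
  refine cfc_congr fun x hx => ?_
  have hx := (hC.spectrum_pos hx).ne'
  field_simp

lemma inv_smul_wHarm_one_left_sub_one {C : H →L[ℂ] H} (hC : IsStrictlyPositive C) {t : ℝ}
    (ht : t ∈ Ioc (0:ℝ) 1) :
    t⁻¹ • (wHarm t 1 C - 1) = cfc (fun x => (x - 1) / ((1 - t) * x + t)) C := by
  have hden : ∀ x ∈ spectrum ℝ C, 0 < (1 - t) * x + t := fun x hx =>
    one_sub_mul_add_pos (hC.spectrum_pos hx) (Ioc_subset_Icc_self ht)
  have hcont : ContinuousOn (fun x => x / ((1 - t) * x + t)) (spectrum ℝ C) :=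
    continuousOn_id.div (by fun_prop) fun x hx => (hden x hx).ne'
  rw [wHarm_one_left hC (Ioc_subset_Icc_self ht), ← cfc_const_one ℝ C,
    ← cfc_sub (a := C) (fun x => x / ((1 - t) * x + t)) (fun _ => (1:ℝ)) hcont
      continuousOn_const, ← cfc_smul t⁻¹ (fun x => x / ((1 - t) * x + t) - 1) C
      (hcont.sub continuousOn_const)]
  refine cfc_congr fun x hx => ?_
  rw [smul_eq_mul, div_sub_one (hden x hx).ne', ← mul_div_assoc]
  congr 1
  field_simp [ht.1.ne']
  ring

lemma opSqrt_eq_sqrt {A : H →L[ℂ] H} (hA : 0 ≤ A) : opSqrt A = CFC.sqrt A := by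
  rw [CFC.sqrt_eq_real_sqrt A hA, cfcₙ_eq_cfc, opSqrt]

lemma IsStrictlyPositive.opSqrt {A : H →L[ℂ] H} (hA : IsStrictlyPositive A) :
    IsStrictlyPositive (opSqrt A) :=
  opSqrt_eq_sqrt hA.nonneg ▸ hA.sqrt

lemma opSqrt_mul_self {A : H →L[ℂ] H} (hA : 0 ≤ A) : opSqrt A * opSqrt A = A := by
  rw [opSqrt_eq_sqrt hA, CFC.sqrt_mul_sqrt_self A]

lemma IsStrictlyPositive.opInvSqrt_conj {A B : H →L[ℂ] H} (hA : IsStrictlyPositive A)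
    (hB : IsStrictlyPositive B) : IsStrictlyPositive (opInvSqrt A * B * opInvSqrt A) :=
  have hb := hA.opSqrt.ringInverse
  IsStrictlyPositive.conjugate_of_isUnit_of_isSelfAdjoint B _ hb.isUnit hb.isSelfAdjoint hB

lemma opSqrt_mul_opInvSqrt_conj {A : H →L[ℂ] H} (hA : IsUnit (opSqrt A)) (B : H →L[ℂ] H) :
    opSqrt A * (opInvSqrt A * B * opInvSqrt A) * opSqrt A = B := by
  simp only [opInvSqrt, opInv, ← mul_assoc, Ring.mul_inverse_cancel _ hA, one_mul,
    Ring.inverse_mul_cancel_right _ _ hA]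

/-- Integral representation `S(A|B) = ∫₀¹ (A!ₜB − A)/t dt` for positive
invertible `A, B`. -/
theorem relEntropy_integral_rep (A B : H →L[ℂ] H) (hA : 0 ≤ A) (hA' : IsUnit A)
    (hB : 0 ≤ B) (hB' : IsUnit B) :
    relEntropy A B = ∫ t in (0:ℝ)..1, t⁻¹ • (wHarm t A B - A) := by
  have hApos := hA'.isStrictlyPositive hA
  have ha := hApos.opSqrt
  have hC := hApos.opInvSqrt_conj (hB'.isStrictlyPositive hB)
  have hA_eq : opSqrt A * 1 * opSqrt A = A := by rw [mul_one, opSqrt_mul_self hA]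
  have hB_eq := opSqrt_mul_opInvSqrt_conj ha.isUnit B
  set a := opSqrt A
  set C := opInvSqrt A * B * opInvSqrt A
  have hconj : ∀ t ∈ Ioc (0:ℝ) 1,
      t⁻¹ • (wHarm t A B - A) = a * cfc (fun x => (x - 1) / ((1 - t) * x + t)) C * a := by
    intro t ht
    calc t⁻¹ • (wHarm t A B - A) = t⁻¹ • (wHarm t (a * 1 * a) (a * C * a) - a * 1 * a) := by
          rw [hA_eq, hB_eq]
      _ = a * (t⁻¹ • (wHarm t 1 C - 1)) * a := by
          rw [wHarm_conj t ha.isUnit, ← sub_mul, ← mul_sub, mul_smul_comm, smul_mul_assoc]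
      _ = _ := by rw [inv_smul_wHarm_one_left_sub_one hC ht]
  calc relEntropy A B = a * opLog C * a := rfl
    _ = a * (∫ t in Ioc (0:ℝ) 1, cfc (fun x => (x - 1) / ((1 - t) * x + t)) C) * a := by
        rw [opLog, cfc_log_eq_setIntegral hC]
    _ = ∫ t in Ioc (0:ℝ) 1, a * cfc (fun x => (x - 1) / ((1 - t) * x + t)) C * a :=
        (integral_mul_mul_of_isUnit ha.isUnit ha.isUnit _).symm
    _ = ∫ t in Ioc (0:ℝ) 1, t⁻¹ • (wHarm t A B - A) :=
        setIntegral_congr_fun measurableSet_Ioc fun t ht => (hconj t ht).symm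
    _ = ∫ t in (0:ℝ)..1, t⁻¹ • (wHarm t A B - A) :=
        (intervalIntegral.integral_of_le zero_le_one).symm
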